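/- arXiv:2211.12106 — 2 statements merged into one kernel-verified Lean document; each statement's English description precedes it below -/
import Mathlib

section
/- The polynomial γ(x,y) = −2x⁴ − 2y⁴ + 12x²y² − 4y³ + 12x²y + x² − y² − 3y + 10 is harmonic on ℝ², is even in x, and has critical points at (−1/2, 0) and (1/2, 0), both of which are non-degenerate (the Hessian determinant at each is nonzero). -/
/-!
Everything is a computation with the explicit gradient and Hessian of `γ`. On the line `y = 0`
the gradient is `(2x(1 - 4x²), 3(4x² - 1))`, which vanishes exactly at `x = ±1/2`. Since `γ` is
harmonic its Hessian is traceless, so the Hessian determinant is `-(γ_xx² + γ_xy²)`; at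
`(±1/2, 0)` this is nonzero because `γ_xx = 2 - 24x² = -4` there.
-/

/-- The Laplacian of a function on `ℝ × ℝ`. -/
noncomputable def lap (f : ℝ × ℝ → ℝ) (p : ℝ × ℝ) : ℝ :=
  fderiv ℝ (fun q => fderiv ℝ f q ((1 : ℝ), (0 : ℝ))) p ((1 : ℝ), (0 : ℝ)) +
  fderiv ℝ (fun q => fderiv ℝ f q ((0 : ℝ), (1 : ℝ))) p ((0 : ℝ), (1 : ℝ))

/-- Second directional derivative. -/
noncomputable def secondDeriv (f : ℝ × ℝ → ℝ) (p v w : ℝ × ℝ) : ℝ :=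
  fderiv ℝ (fun q => fderiv ℝ f q w) p v

noncomputable def hessianDet (f : ℝ × ℝ → ℝ) (p : ℝ × ℝ) : ℝ :=
  secondDeriv f p (1, 0) (1, 0) * secondDeriv f p (0, 1) (0, 1) -
    secondDeriv f p (1, 0) (0, 1) * secondDeriv f p (0, 1) (1, 0)

theorem lap_eq_secondDeriv_add (f : ℝ × ℝ → ℝ) (p : ℝ × ℝ) :
    lap f p = secondDeriv f p (1, 0) (1, 0) + secondDeriv f p (0, 1) (0, 1) :=
  rfl

noncomputable def harmonicQuartic (p : ℝ × ℝ) : ℝ :=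
  -2 * p.1 ^ 4 - 2 * p.2 ^ 4 + 12 * p.1 ^ 2 * p.2 ^ 2 - 4 * p.2 ^ 3 +
    12 * p.1 ^ 2 * p.2 + p.1 ^ 2 - p.2 ^ 2 - 3 * p.2 + 10

theorem harmonicQuartic_neg_fst (x y : ℝ) :
    harmonicQuartic (-x, y) = harmonicQuartic (x, y) := by
  simp only [harmonicQuartic]
  ring

theorem fderiv_harmonicQuartic_apply (p v : ℝ × ℝ) :
    fderiv ℝ harmonicQuartic p v =
      (-8 * p.1 ^ 3 + 24 * p.1 * p.2 ^ 2 + 24 * p.1 * p.2 + 2 * p.1) * v.1 +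
        (-8 * p.2 ^ 3 + 24 * p.1 ^ 2 * p.2 - 12 * p.2 ^ 2 + 12 * p.1 ^ 2 - 2 * p.2 - 3) * v.2 := by
  unfold harmonicQuartic
  simp (disch := fun_prop) [fderiv_fun_add, fderiv_fun_sub, fderiv_fun_mul, fderiv_fun_pow,
    fderiv_fst, fderiv_snd]
  ring

theorem secondDeriv_harmonicQuartic (p v w : ℝ × ℝ) :
    secondDeriv harmonicQuartic p v w =
      ((-24 * p.1 ^ 2 + 24 * p.2 ^ 2 + 24 * p.2 + 2) * v.1 + (48 * p.1 * p.2 + 24 * p.1) * v.2) *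
          w.1 +
        ((48 * p.1 * p.2 + 24 * p.1) * v.1 + (24 * p.1 ^ 2 - 24 * p.2 ^ 2 - 24 * p.2 - 2) * v.2) *
          w.2 := by
  simp only [secondDeriv, fderiv_harmonicQuartic_apply]
  simp (disch := fun_prop) [fderiv_fun_add, fderiv_fun_sub, fderiv_fun_mul, fderiv_fun_pow,
    fderiv_fst, fderiv_snd]
  ring

theorem lap_harmonicQuartic (p : ℝ × ℝ) : lap harmonicQuartic p = 0 := by
  rw [lap_eq_secondDeriv_add, secondDeriv_harmonicQuartic, secondDeriv_harmonicQuartic]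
  ring

theorem hessianDet_harmonicQuartic (p : ℝ × ℝ) :
    hessianDet harmonicQuartic p =
      -((-24 * p.1 ^ 2 + 24 * p.2 ^ 2 + 24 * p.2 + 2) ^ 2 + (48 * p.1 * p.2 + 24 * p.1) ^ 2) := by
  simp only [hessianDet, secondDeriv_harmonicQuartic]
  ring

theorem fderiv_harmonicQuartic_eq_zero {x : ℝ} (hx : x ^ 2 = 1 / 4) :
    fderiv ℝ harmonicQuartic (x, 0) = 0 := by
  refine ContinuousLinearMap.ext fun v => ?_
  rw [fderiv_harmonicQuartic_apply, zero_apply]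
  linear_combination (-8 * x * v.1 + 12 * v.2) * hx

theorem hessianDet_harmonicQuartic_ne_zero {x : ℝ} (hx : x ^ 2 = 1 / 4) :
    hessianDet harmonicQuartic (x, 0) ≠ 0 := by
  rw [hessianDet_harmonicQuartic]
  nlinarith

theorem harmonic_polynomial_example (γ : ℝ × ℝ → ℝ)
    (hγ : γ = fun p : ℝ × ℝ =>
      -2 * p.1 ^ 4 - 2 * p.2 ^ 4 + 12 * p.1 ^ 2 * p.2 ^ 2 - 4 * p.2 ^ 3 +
        12 * p.1 ^ 2 * p.2 + p.1 ^ 2 - p.2 ^ 2 - 3 * p.2 + 10) :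
    (∀ p : ℝ × ℝ, lap γ p = 0) ∧
    (∀ x y : ℝ, γ (-x, y) = γ (x, y)) ∧
    (fderiv ℝ γ (-(1/2 : ℝ), (0 : ℝ)) = 0 ∧ fderiv ℝ γ ((1/2 : ℝ), (0 : ℝ)) = 0) ∧
    (secondDeriv γ (-(1/2), 0) (1, 0) (1, 0) * secondDeriv γ (-(1/2), 0) (0, 1) (0, 1) -
        secondDeriv γ (-(1/2), 0) (1, 0) (0, 1) * secondDeriv γ (-(1/2), 0) (0, 1) (1, 0) ≠ 0) ∧
    (secondDeriv γ ((1/2), 0) (1, 0) (1, 0) * secondDeriv γ ((1/2), 0) (0, 1) (0, 1) -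
        secondDeriv γ ((1/2), 0) (1, 0) (0, 1) * secondDeriv γ ((1/2), 0) (0, 1) (1, 0) ≠ 0) := by
  obtain rfl : γ = harmonicQuartic := hγ
  refine ⟨lap_harmonicQuartic, harmonicQuartic_neg_fst,
    ⟨fderiv_harmonicQuartic_eq_zero (by norm_num), fderiv_harmonicQuartic_eq_zero (by norm_num)⟩,
    hessianDet_harmonicQuartic_ne_zero (by norm_num),
    hessianDet_harmonicQuartic_ne_zero (by norm_num)⟩
end

section
/- Define κ(ξ) := 8ξ²/(1+ξ²)² for ξ ∈ ℝ. Then the bounded harmonic extension of κ to the upper half-plane is Γ(ξ,μ) = 4·(2ξ² + μ(ξ² + (μ+1)²))/(ξ² + (μ+1)²)², i.e., Γ is harmonic on ℝ²₊ = {μ > 0}, bounded, continuous up to the boundary with Γ(ξ,0) = κ(ξ); and Γ has a unique critical point in ℝ²₊, located at (0,1), which is non-degenerate. -/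
open MeasureTheory Real

/-!
Writing `z = ξ + iμ`, `Γ` is the real part of the holomorphic function `4iz/(z + i)²`. The real part
of a holomorphic `f` read in coordinates has Laplacian `Re f'' - Re f'' = 0`, gradient zero exactly
where `f' = 0`, and Hessian determinant `-|f''|²`. Here `f'(z) = -4i(z - i)/(z + i)³` vanishes only at
`z = i`, where `f''(i) = 1/2`.
-/

open Complex Filter Topology

noncomputable def reOnPlane (f : ℂ → ℂ) (q : ℝ × ℝ) : ℝ := (f (equivRealProdCLM.symm q)).re

namespace Complex

@[simp] lemma equivRealProdCLM_symm_one_zero : equivRealProdCLM.symm ((1 : ℝ), (0 : ℝ)) = 1 := by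
  simp [equivRealProdCLM_symm_apply]

@[simp] lemma equivRealProdCLM_symm_zero_one : equivRealProdCLM.symm ((0 : ℝ), (1 : ℝ)) = I := by
  simp [equivRealProdCLM_symm_apply]

@[simp] lemma equivRealProdCLM_symm_im (p : ℝ × ℝ) : (equivRealProdCLM.symm p).im = p.2 := by
  simp [equivRealProdCLM_symm_apply]

end Complex

section ReOnPlane

variable {f : ℂ → ℂ} {f' : ℂ} {p : ℝ × ℝ}

lemma hasFDerivAt_reOnPlane (h : HasDerivAt f f' (equivRealProdCLM.symm p)) :
    HasFDerivAt (reOnPlane f)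
      (reCLM.comp ((f' • (1 : ℂ →L[ℝ] ℂ)).comp (equivRealProdCLM.symm : ℝ × ℝ →L[ℝ] ℂ))) p :=
  reCLM.hasFDerivAt.comp p (h.complexToReal_fderiv.comp p equivRealProdCLM.symm.hasFDerivAt)

lemma fderiv_reOnPlane_apply (h : HasDerivAt f f' (equivRealProdCLM.symm p)) (v : ℝ × ℝ) :
    fderiv ℝ (reOnPlane f) p v = (f' * equivRealProdCLM.symm v).re := by
  simp [(hasFDerivAt_reOnPlane h).fderiv]

lemma fderiv_reOnPlane_eq_zero_iff (h : HasDerivAt f f' (equivRealProdCLM.symm p)) :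
    fderiv ℝ (reOnPlane f) p = 0 ↔ f' = 0 := by
  constructor
  · intro h0
    have hre := fderiv_reOnPlane_apply h (1, 0)
    have him := fderiv_reOnPlane_apply h (0, 1)
    simp only [h0, zero_apply, equivRealProdCLM_symm_one_zero,
      equivRealProdCLM_symm_zero_one, mul_one, mul_I_re] at hre him
    exact Complex.ext hre.symm (neg_eq_zero.mp him.symm)
  · rintro rfl
    ext <;> simp [fderiv_reOnPlane_apply h]

lemma secondDeriv_reOnPlane {U : Set ℂ} (hU : IsOpen U) (hf : DifferentiableOn ℂ f U)
    (hp : equivRealProdCLM.symm p ∈ U) (v w : ℝ × ℝ) :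
    secondDeriv (reOnPlane f) p v w =
      (deriv (deriv f) (equivRealProdCLM.symm p) * equivRealProdCLM.symm w *
        equivRealProdCLM.symm v).re := by
  have hev : (fun q => fderiv ℝ (reOnPlane f) q w) =ᶠ[𝓝 p]
      reOnPlane (fun z => deriv f z * equivRealProdCLM.symm w) := by
    filter_upwards [(hU.preimage equivRealProdCLM.symm.continuous).mem_nhds hp] with q hq
    exact fderiv_reOnPlane_apply (hf.differentiableAt (hU.mem_nhds hq)).hasDerivAt w
  have hderiv : HasDerivAt (fun z => deriv f z * equivRealProdCLM.symm w)
      (deriv (deriv f) (equivRealProdCLM.symm p) * equivRealProdCLM.symm w)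
      (equivRealProdCLM.symm p) :=
    ((hf.deriv hU).differentiableAt (hU.mem_nhds hp)).hasDerivAt.mul_const _
  rw [secondDeriv, hev.fderiv_eq, fderiv_reOnPlane_apply hderiv]

lemma lap_reOnPlane {U : Set ℂ} (hU : IsOpen U) (hf : DifferentiableOn ℂ f U)
    (hp : equivRealProdCLM.symm p ∈ U) :
    lap (reOnPlane f) p = 0 := by
  change secondDeriv _ p _ _ + secondDeriv _ p _ _ = 0
  simp [secondDeriv_reOnPlane hU hf hp]

lemma hessian_det_reOnPlane {U : Set ℂ} (hU : IsOpen U) (hf : DifferentiableOn ℂ f U)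
    (hp : equivRealProdCLM.symm p ∈ U) :
    secondDeriv (reOnPlane f) p (1, 0) (1, 0) * secondDeriv (reOnPlane f) p (0, 1) (0, 1) -
        secondDeriv (reOnPlane f) p (1, 0) (0, 1) * secondDeriv (reOnPlane f) p (0, 1) (1, 0) =
      -normSq (deriv (deriv f) (equivRealProdCLM.symm p)) := by
  simp only [secondDeriv_reOnPlane hU hf hp, equivRealProdCLM_symm_one_zero,
    equivRealProdCLM_symm_zero_one, mul_one, mul_re, mul_im, I_re, I_im, normSq_apply]
  ring

end ReOnPlane

/-- With `w = (z - i)/(z + i)`, the map `Ψ` of the paper is `z ↦ i w` and `γ(ζ) = Re ζ² + 1`, so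
`Γ = Re (1 - w²) = Re (4 i z / (z + i)²)`. -/
noncomputable def gammaC (z : ℂ) : ℂ := 4 * I * z / (z + I) ^ 2

/-- At the pole `(0, -1)` both sides are `0` by the convention `x / 0 = 0`. -/
lemma reOnPlane_gammaC (p : ℝ × ℝ) :
    reOnPlane gammaC p =
      4 * (2 * p.1 ^ 2 + p.2 * (p.1 ^ 2 + (p.2 + 1) ^ 2)) / (p.1 ^ 2 + (p.2 + 1) ^ 2) ^ 2 := by
  simp only [reOnPlane, gammaC, equivRealProdCLM_symm_apply, div_re, normSq_apply, pow_two]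
  simp only [mul_re, re_ofNat, I_re, mul_zero, im_ofNat, I_im, mul_one, sub_self, add_re, ofReal_re,
    ofReal_im, add_zero, zero_mul, mul_im, add_im, zero_add, zero_sub, neg_mul]
  rw [← add_div]
  congr 1 <;> ring

lemma hasDerivAt_gammaC {z : ℂ} (hz : z + I ≠ 0) :
    HasDerivAt gammaC (-4 * I * (z - I) / (z + I) ^ 3) z := by
  have h := ((hasDerivAt_id' z).const_mul (4 * I)).fun_div
    (((hasDerivAt_id' z).add_const I).fun_pow 2) (pow_ne_zero 2 hz)
  refine h.congr_deriv ?_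
  field_simp
  ring

lemma deriv_gammaC_eq_zero_iff {z : ℂ} (hz : z + I ≠ 0) : deriv gammaC z = 0 ↔ z = I := by
  rw [(hasDerivAt_gammaC hz).deriv, div_eq_zero_iff, or_iff_left (pow_ne_zero 3 hz),
    mul_eq_zero, or_iff_right (by simp), sub_eq_zero]

lemma deriv_deriv_gammaC_I : deriv (deriv gammaC) I = 1 / 2 := by
  have hI : I + I ≠ 0 := by simp [← two_mul]
  have hev : deriv gammaC =ᶠ[𝓝 I] fun z => -4 * I * (z - I) / (z + I) ^ 3 := by
    filter_upwards [(continuous_add_const I).continuousAt.eventually_ne hI] with z hz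
    exact (hasDerivAt_gammaC hz).deriv
  have h := (((hasDerivAt_id' I).sub_const I).const_mul (-4 * I)).fun_div
    (((hasDerivAt_id' I).add_const I).fun_pow 3) (pow_ne_zero 3 hI)
  rw [hev.deriv_eq, h.deriv]
  field_simp
  ring_nf
  simp

lemma add_I_ne_zero {z : ℂ} (hz : -1 < z.im) : z + I ≠ 0 := fun h => by
  have := congrArg im h
  simp only [add_im, I_im, zero_im] at this
  linarith

lemma differentiableOn_gammaC : DifferentiableOn ℂ gammaC {z | -1 < z.im} := fun _ hz =>
  (hasDerivAt_gammaC (add_I_ne_zero hz)).differentiableAt.differentiableWithinAt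

lemma abs_reOnPlane_gammaC_le_two {p : ℝ × ℝ} (hp : 0 ≤ p.2) : |reOnPlane gammaC p| ≤ 2 := by
  obtain ⟨x, y⟩ := p
  have hD : x ^ 2 + 1 ≤ x ^ 2 + (y + 1) ^ 2 := by nlinarith
  have hD' : x ^ 2 + 1 ≤ x ^ 2 + y ^ 2 + 1 := by nlinarith
  rw [reOnPlane_gammaC, abs_of_nonneg (by positivity), div_le_iff₀ (by positivity)]
  nlinarith [mul_le_mul hD hD' (by positivity) (by positivity), sq_nonneg (x ^ 2 - 1)]

theorem explicit_extension_example (κ : ℝ → ℝ)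
    (hκ : κ = fun ξ : ℝ => 8 * ξ ^ 2 / (1 + ξ ^ 2) ^ 2)
    (Γ : ℝ × ℝ → ℝ)
    (hΓ : Γ = fun p : ℝ × ℝ =>
      4 * (2 * p.1 ^ 2 + p.2 * (p.1 ^ 2 + (p.2 + 1) ^ 2)) / (p.1 ^ 2 + (p.2 + 1) ^ 2) ^ 2) :
    (∀ p : ℝ × ℝ, 0 < p.2 → lap Γ p = 0) ∧
    (∃ C : ℝ, ∀ p : ℝ × ℝ, 0 < p.2 → |Γ p| ≤ C) ∧
    ContinuousOn Γ {p : ℝ × ℝ | 0 ≤ p.2} ∧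
    (∀ ξ : ℝ, Γ (ξ, 0) = κ ξ) ∧
    (∀ p : ℝ × ℝ, 0 < p.2 → (fderiv ℝ Γ p = 0 ↔ p = ((0 : ℝ), (1 : ℝ)))) ∧
    (secondDeriv Γ (0, 1) (1, 0) (1, 0) * secondDeriv Γ (0, 1) (0, 1) (0, 1) -
        secondDeriv Γ (0, 1) (1, 0) (0, 1) * secondDeriv Γ (0, 1) (0, 1) (1, 0) ≠ 0) := by
  obtain rfl : Γ = reOnPlane gammaC := hΓ.trans (funext reOnPlane_gammaC).symm
  have hU : IsOpen {z : ℂ | -1 < z.im} := isOpen_lt continuous_const continuous_im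
  have hmem {p : ℝ × ℝ} (hp : 0 ≤ p.2) : equivRealProdCLM.symm p ∈ {z : ℂ | -1 < z.im} := by
    rw [Set.mem_ofPred_eq, equivRealProdCLM_symm_im]
    linarith
  refine ⟨fun p hp => lap_reOnPlane hU differentiableOn_gammaC (hmem hp.le),
    ⟨2, fun p hp => abs_reOnPlane_gammaC_le_two hp.le⟩, ?_, fun ξ => ?_, fun p hp => ?_, ?_⟩
  · exact continuous_re.comp_continuousOn (differentiableOn_gammaC.continuousOn.comp
      equivRealProdCLM.symm.continuous.continuousOn fun p hp => hmem hp)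
  · rw [hκ, reOnPlane_gammaC]
    ring_nf
  · have hz := add_I_ne_zero (hmem hp.le)
    rw [fderiv_reOnPlane_eq_zero_iff (hasDerivAt_gammaC hz).differentiableAt.hasDerivAt,
      deriv_gammaC_eq_zero_iff hz, ← equivRealProdCLM_symm_zero_one,
      equivRealProdCLM.symm.injective.eq_iff]
  · rw [hessian_det_reOnPlane hU differentiableOn_gammaC (hmem zero_le_one),
      equivRealProdCLM_symm_zero_one, deriv_deriv_gammaC_I]
    norm_num
end
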